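/- For any z₁ > 0 and z₂ > 0, ∑_{k=1}^∞ exp(−z₁·k + z₂·log k) ≤ (C/z₁)·(z₂/z₁)^{z₂} for some absolute constant C. -/

import Mathlib

/-!
Write `z₁ = s + t`. The elementary bound `a log x - s x ≤ a log (a / s) - a` (the maximum of the
left side, at `x = a / s`) removes the polynomial factor `k ^ a` at the cost of `e^{-s k}`, and the
remaining geometric series `∑_{k ≥ 1} e^{-t k} = 1 / (e^t - 1)` is at most `1 / t`.
With `s = t = z₁ / 2` the constant is `(2 / e) ^ z₂ ≤ 1`, so `C = 2` works.
-/

open Real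

lemma mul_log_sub_mul_le {a b x : ℝ} (ha : 0 < a) (hb : 0 < b) (hx : 0 < x) :
    a * log x - b * x ≤ a * log (a / b) - a := by
  have hlog : log x - log (a / b) ≤ x * b / a - 1 := by
    rw [← log_div hx.ne' (by positivity), div_div_eq_mul_div]
    exact log_le_sub_one_of_pos (by positivity)
  have := mul_le_mul_of_nonneg_left hlog ha.le
  rw [mul_sub, mul_sub, mul_div_cancel₀ _ ha.ne'] at this
  linarith

lemma hasSum_exp_neg_mul_succ {t : ℝ} (ht : 0 < t) :
    HasSum (fun k : ℕ => exp (-t * (k + 1))) (exp t - 1)⁻¹ := by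
  have hr : exp (-t) < 1 := exp_lt_one_iff.mpr (neg_lt_zero.mpr ht)
  have hgeom := (hasSum_geometric_of_lt_one (exp_pos _).le hr).mul_left (exp (-t))
  have hterm : (fun k : ℕ => exp (-t * (k + 1))) = fun k => exp (-t) * exp (-t) ^ k := by
    ext k
    rw [← exp_nat_mul, ← exp_add]
    ring_nf
  have hval : exp (-t) * (1 - exp (-t))⁻¹ = (exp t - 1)⁻¹ := by
    rw [exp_neg]
    field_simp [(sub_pos.mpr (one_lt_exp_iff.mpr ht)).ne']
  rwa [hterm, ← hval]

lemma tsum_exp_neg_mul_succ_le {t : ℝ} (ht : 0 < t) :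
    ∑' k : ℕ, exp (-t * (k + 1)) ≤ t⁻¹ := by
  rw [(hasSum_exp_neg_mul_succ ht).tsum_eq]
  gcongr
  linarith [add_one_le_exp t]

theorem tsum_exp_neg_mul_add_mul_log_le {a s t : ℝ} (ha : 0 < a) (hs : 0 < s) (ht : 0 < t) :
    ∑' k : ℕ, exp (-(s + t) * (k + 1) + a * log (k + 1)) ≤
      exp (a * log (a / s) - a) * t⁻¹ := by
  have hterm (k : ℕ) : exp (-(s + t) * (k + 1) + a * log (k + 1)) ≤
      exp (a * log (a / s) - a) * exp (-t * (k + 1)) := by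
    rw [← exp_add, exp_le_exp]
    linarith [mul_log_sub_mul_le ha hs (by positivity : (0 : ℝ) < k + 1)]
  have hsum := (hasSum_exp_neg_mul_succ ht).summable.mul_left (exp (a * log (a / s) - a))
  calc ∑' k : ℕ, exp (-(s + t) * (k + 1) + a * log (k + 1))
      ≤ ∑' k : ℕ, exp (a * log (a / s) - a) * exp (-t * (k + 1)) :=
        (hsum.of_nonneg_of_le (fun _ => (exp_pos _).le) hterm).tsum_le_tsum hterm hsum
    _ = exp (a * log (a / s) - a) * ∑' k : ℕ, exp (-t * (k + 1)) := tsum_mul_left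
    _ ≤ exp (a * log (a / s) - a) * t⁻¹ := by gcongr; exact tsum_exp_neg_mul_succ_le ht

lemma exp_mul_log_two_mul_sub_le_rpow {a c : ℝ} (ha : 0 < a) (hc : 0 < c) :
    exp (a * log (2 * c) - a) ≤ c ^ a := by
  rw [rpow_def_of_pos hc, exp_le_exp, log_mul two_ne_zero hc.ne']
  nlinarith [log_two_lt_d9]

/-- Laplace-method bound: there is an absolute constant `C` such that for all `z₁, z₂ > 0`,
`∑_{k≥1} exp(-z₁ k + z₂ log k) ≤ (C/z₁) (z₂/z₁)^{z₂}`. -/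
theorem laplace_sum_bound :
    ∃ C : ℝ, 0 < C ∧ ∀ z₁ z₂ : ℝ, 0 < z₁ → 0 < z₂ →
      ∑' k : ℕ, Real.exp (-z₁ * (k + 1) + z₂ * Real.log (k + 1)) ≤
        C / z₁ * (z₂ / z₁) ^ z₂ := by
  refine ⟨2, two_pos, fun z₁ z₂ hz₁ hz₂ => ?_⟩
  have hhalf : 0 < z₁ / 2 := half_pos hz₁
  have hratio : z₂ / (z₁ / 2) = 2 * (z₂ / z₁) := by field_simp
  calc ∑' k : ℕ, exp (-z₁ * (k + 1) + z₂ * log (k + 1))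
      = ∑' k : ℕ, exp (-(z₁ / 2 + z₁ / 2) * (k + 1) + z₂ * log (k + 1)) := by
        rw [add_halves]
    _ ≤ exp (z₂ * log (2 * (z₂ / z₁)) - z₂) * (z₁ / 2)⁻¹ := by
        rw [← hratio]; exact tsum_exp_neg_mul_add_mul_log_le hz₂ hhalf hhalf
    _ ≤ (z₂ / z₁) ^ z₂ * (z₁ / 2)⁻¹ := by
        gcongr; exact exp_mul_log_two_mul_sub_le_rpow hz₂ (by positivity)
    _ = 2 / z₁ * (z₂ / z₁) ^ z₂ := by field_simp
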